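/- Define Q : ℝ → ℝ by Q(x) = (3 / cosh²(2x))^{1/4}. Then Q is twice differentiable on ℝ and satisfies the ground state equation Q''(x) + Q(x)⁵ − Q(x) = 0 for every x ∈ ℝ. -/

import Mathlib

/-- The ground state `Q(x) = (3 / cosh²(2x))^(1/4)` of the 1D critical focusing NLS. -/
noncomputable def groundState (x : ℝ) : ℝ :=
  (3 / (Real.cosh (2 * x)) ^ 2) ^ ((1 : ℝ) / 4)

/-!
Writing `Q = 3^(1/4) · cosh(2x)^(-1/2)`, the identity `sinh² = cosh² - 1` turns the second
derivative of a power `cosh(kx)^r` into a combination of `cosh(kx)^r` and `cosh(kx)^(r-2)`.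
For `k = 2`, `r = -1/2` this gives `Q'' = Q - 3^(5/4) cosh(2x)^(-5/2)`, and the last term is
exactly `Q⁵` because `(3^(1/4))⁵ = 3 · 3^(1/4)`.
-/

open Real

section CoshMulRpow

variable (k r : ℝ)

theorem hasDerivAt_cosh_mul_rpow (x : ℝ) :
    HasDerivAt (fun x => cosh (k * x) ^ r)
      (r * k * sinh (k * x) * cosh (k * x) ^ (r - 1)) x := by
  have h := (((hasDerivAt_id' x).const_mul k).cosh).rpow_const (p := r)
    (Or.inl (cosh_pos _).ne')
  convert h using 1
  ring

theorem deriv_cosh_mul_rpow :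
    deriv (fun x => cosh (k * x) ^ r) =
      fun x => r * k * sinh (k * x) * cosh (k * x) ^ (r - 1) :=
  funext fun x => (hasDerivAt_cosh_mul_rpow k r x).deriv

theorem hasDerivAt_deriv_cosh_mul_rpow (x : ℝ) :
    HasDerivAt (deriv fun x => cosh (k * x) ^ r)
      (r * k ^ 2 * (r * cosh (k * x) ^ r - (r - 1) * cosh (k * x) ^ (r - 2))) x := by
  have hc : cosh (k * x) ≠ 0 := (cosh_pos _).ne'
  have h := (((hasDerivAt_id' x).const_mul k).sinh.fun_mul
    (hasDerivAt_cosh_mul_rpow k (r - 1) x)).const_mul (r * k)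
  rw [deriv_cosh_mul_rpow]
  simp only [mul_assoc] at h ⊢
  refine h.congr_deriv ?_
  rw [show r - 1 - 1 = r - 2 by ring, rpow_sub_one hc, rpow_sub (cosh_pos _), rpow_two]
  field_simp
  rw [sinh_sq]
  ring

end CoshMulRpow

theorem groundState_eq_mul_cosh_rpow :
    groundState = fun x => 3 ^ (1 / 4 : ℝ) * cosh (2 * x) ^ (-(1 / 2) : ℝ) := by
  funext x
  have hc : 0 < cosh (2 * x) := cosh_pos _
  rw [groundState, div_rpow (by norm_num) (by positivity), ← rpow_natCast, ← rpow_mul hc.le,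
    div_eq_mul_inv, ← rpow_neg hc.le]
  norm_num

/-- The ground state `Q(x) = (3 / cosh²(2x))^(1/4)` is twice differentiable on `ℝ`
and satisfies the ground state equation `Q'' + Q⁵ - Q = 0`. -/
theorem groundState_satisfies_ground_state_eq :
    (Differentiable ℝ groundState ∧ Differentiable ℝ (deriv groundState)) ∧
      ∀ x : ℝ,
        deriv (deriv groundState) x + (groundState x) ^ 5 - groundState x = 0 := by
  set g : ℝ → ℝ := fun x => cosh (2 * x) ^ (-(1 / 2) : ℝ)
  have hQ : groundState = fun x => 3 ^ (1 / 4 : ℝ) * g x := groundState_eq_mul_cosh_rpow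
  have hQ' : deriv groundState = fun x => 3 ^ (1 / 4 : ℝ) * deriv g x := by
    rw [hQ]
    exact funext fun x => deriv_const_mul _ (hasDerivAt_cosh_mul_rpow 2 _ x).differentiableAt
  refine ⟨⟨?_, ?_⟩, fun x => ?_⟩
  · rw [hQ]
    exact fun x => ((hasDerivAt_cosh_mul_rpow 2 _ x).const_mul _).differentiableAt
  · rw [hQ']
    exact fun x => ((hasDerivAt_deriv_cosh_mul_rpow 2 _ x).const_mul _).differentiableAt
  have hA : ((3 : ℝ) ^ (1 / 4 : ℝ)) ^ 5 = 3 * 3 ^ (1 / 4 : ℝ) := by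
    rw [pow_succ, ← rpow_natCast, ← rpow_mul (by norm_num)]
    norm_num
  have hg : g x ^ 5 = cosh (2 * x) ^ (-(1 / 2) - 2 : ℝ) := by
    rw [← rpow_natCast, ← rpow_mul (cosh_pos _).le]
    norm_num
  rw [hQ', ((hasDerivAt_deriv_cosh_mul_rpow 2 _ x).const_mul _).deriv, hQ, mul_pow, hA, hg]
  ring
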